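/- Let G be a centerless group with the finitely generated fixed subgroup property of automorphisms, whose derived subgroup [G, G] is finitely generated, and such that for every automorphism ψ of G and every finitely generated subgroup H ≤ G, the intersection H ∩ Fix ψ is finitely generated. Then for every m ≥ 1, the group G × ℤ^m has the finitely generated fixed subgroup property of automorphisms. -/

import Mathlib

/-- The fixed subgroup of an endomorphism of a group. -/
def fixedSubgroup {G : Type*} [Group G] (φ : G →* G) : Subgroup G where
  carrier := {g | φ g = g}
  one_mem' := map_one φ
  mul_mem' := by
    intro a b ha hb
    simp only [Set.mem_setOf_eq, map_mul] at *
    rw [ha, hb]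
  inv_mem' := by
    intro a ha
    simp only [Set.mem_setOf_eq, map_inv] at *
    rw [ha]

/-!
Since `G` is centerless, the center of `G × A` is `1 × A`, so an automorphism `φ` has the form
`φ (g, a) = (α g, f g * β a)` with `α` an automorphism of `G` and `f : G →* A`. The fixed points
with trivial `A`-coordinate are `T ∩ ker f` for `T = Fix α`, and the `A`-coordinates of fixed
points form a subgroup of the finitely generated abelian group `A`. Finally `T ∩ ker f` lies
between `N = [G, G] ∩ T` and `T`, both finitely generated by hypothesis, and `T / N` is a
finitely generated abelian group, so every subgroup between `N` and `T` is finitely generated.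
-/

open commutatorElement

namespace Subgroup

variable {G G' : Type*} [Group G] [Group G']

theorem FG.map {H : Subgroup G} (hH : H.FG) (f : G →* G') : (H.map f).FG := by
  classical
  obtain ⟨s, rfl⟩ := hH
  exact ⟨s.image f, by rw [Finset.coe_image, MonoidHom.map_closure]⟩

theorem fg_of_fg_map_of_fg_inf_ker (f : G →* G') {H : Subgroup G} (hmap : (H.map f).FG)
    (hker : (H ⊓ f.ker).FG) : H.FG := by
  classical
  obtain ⟨t, ht⟩ := hmap
  obtain ⟨s, hs⟩ := hker
  have htH : (t : Set G') ⊆ f '' H := by rw [← coe_map, ← ht]; exact subset_closure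
  obtain ⟨t', ht'H, rfl⟩ := Finset.subset_set_image_iff.mp htH
  set K := Subgroup.closure ((s ∪ t' : Finset G) : Set G)
  have hsH : (s : Set G) ⊆ H := fun x hx => (hs ▸ subset_closure hx : x ∈ H ⊓ f.ker).1
  have hKH : K ≤ H := (closure_le H).mpr (by simpa using ⟨hsH, ht'H⟩)
  refine ⟨s ∪ t', le_antisymm hKH fun h hh => ?_⟩
  have hmapK : H.map f ≤ K.map f := by
    rw [← ht, Finset.coe_image, ← MonoidHom.map_closure]
    exact map_mono (closure_mono (by simp))
  obtain ⟨k, hk, hfk⟩ := hmapK ⟨h, hh, rfl⟩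
  have hkerK : H ⊓ f.ker ≤ K := hs ▸ closure_mono (by simp)
  have : k⁻¹ * h ∈ K := hkerK (mem_inf.mpr ⟨mul_mem (inv_mem (hKH hk)) hh, by simp [hfk]⟩)
  simpa only [mul_inv_cancel_left] using mul_mem hk this

theorem fg_of_commGroup {A : Type*} [CommGroup A] [Group.FG A] (H : Subgroup A) : H.FG := by
  rw [fg_iff_add_fg, ← AddSubgroup.toIntSubmodule_toAddSubgroup H.toAddSubgroup,
    ← Submodule.fg_iff_addSubgroup_fg]
  have : Module.Finite ℤ (Additive A) := Module.Finite.iff_addGroup_fg.mpr inferInstance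
  exact IsNoetherian.noetherian _

theorem fg_subgroupOf_iff {H K : Subgroup G} (h : H ≤ K) : (H.subgroupOf K).FG ↔ H.FG := by
  rw [← Group.fg_iff_subgroup_fg, ← Group.fg_iff_subgroup_fg]
  exact ⟨fun _ => Group.fg_of_surjective (f := (subgroupOfEquivOfLe h).toMonoidHom)
      (subgroupOfEquivOfLe h).surjective,
    fun _ => Group.fg_of_surjective (f := (subgroupOfEquivOfLe h).symm.toMonoidHom)
      (subgroupOfEquivOfLe h).symm.surjective⟩

theorem fg_of_commutator_le_of_le [Group.FG G] {N S : Subgroup G} (hN : N.FG)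
    (hcomm : _root_.commutator G ≤ N) (hNS : N ≤ S) : S.FG := by
  have := Normal.of_commutator_le _ hcomm
  let : CommGroup (G ⧸ N) :=
    { mul_comm := fun a b => by
        obtain ⟨x, rfl⟩ := QuotientGroup.mk_surjective a
        obtain ⟨y, rfl⟩ := QuotientGroup.mk_surjective b
        rw [← QuotientGroup.mk_mul, ← QuotientGroup.mk_mul, QuotientGroup.eq,
          show (x * y)⁻¹ * (y * x) = ⁅y⁻¹, x⁻¹⁆ by group]
        exact hcomm (commutator_mem_commutator (mem_top _) (mem_top _)) }
  refine fg_of_fg_map_of_fg_inf_ker (QuotientGroup.mk' N) (fg_of_commGroup _) ?_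
  rwa [QuotientGroup.ker_mk', inf_eq_right.mpr hNS]

theorem fg_of_le_of_commutator_le {N S T : Subgroup G} (hNS : N ≤ S) (hST : S ≤ T)
    (hT : T.FG) (hN : N.FG) (hTN : ⁅T, T⁆ ≤ N) : S.FG := by
  have := (Group.fg_iff_subgroup_fg T).mpr hT
  rw [← fg_subgroupOf_iff hST]
  refine fg_of_commutator_le_of_le ((fg_subgroupOf_iff (hNS.trans hST)).mpr hN) ?_
    (subgroupOf_mono T hNS)
  exact map_le_iff_le_comap.mp (T.map_subtype_commutator.trans_le hTN)

end Subgroup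

@[simp]
theorem mem_fixedSubgroup {G : Type*} [Group G] {φ : G →* G} {g : G} :
    g ∈ fixedSubgroup φ ↔ φ g = g :=
  Iff.rfl

namespace MulEquiv

variable {G A : Type*} [Group G] [CommGroup A]

theorem fst_apply_one_left (hc : Subgroup.center G = ⊥) (φ : G × A ≃* G × A) (a : A) :
    (φ (1, a)).1 = 1 := by
  have hcen : (1, a) ∈ Subgroup.center (G × A) := by
    rw [Subgroup.center_prod, CommGroup.center_eq_top]
    exact Subgroup.mem_prod.mpr ⟨one_mem _, Subgroup.mem_top a⟩
  have : φ (1, a) ∈ Subgroup.center (G × A) := MulEquivClass.apply_mem_center φ hcen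
  rw [Subgroup.center_prod, hc] at this
  exact (Subgroup.mem_prod.mp this).1

theorem fst_apply_eq (hc : Subgroup.center G = ⊥) (φ : G × A ≃* G × A) (x : G × A) :
    (φ x).1 = (φ (x.1, 1)).1 := by
  calc (φ x).1 = (φ ((x.1, 1) * (1, x.2))).1 := by simp
    _ = (φ (x.1, 1)).1 * (φ (1, x.2)).1 := by rw [map_mul, Prod.fst_mul]
    _ = (φ (x.1, 1)).1 := by rw [fst_apply_one_left hc, mul_one]

def inducedFst (hc : Subgroup.center G = ⊥) (φ : G × A ≃* G × A) : G ≃* G where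
  toFun g := (φ (g, 1)).1
  invFun g := (φ.symm (g, 1)).1
  left_inv g := by
    change (φ.symm ((φ (g, 1)).1, 1)).1 = g
    rw [← fst_apply_eq hc φ.symm, symm_apply_apply]
  right_inv g := by
    change (φ ((φ.symm (g, 1)).1, 1)).1 = g
    rw [← fst_apply_eq hc φ, apply_symm_apply]
  map_mul' g h := by rw [← Prod.fst_mul, ← map_mul, Prod.mk_mul_mk, one_mul]

theorem fixedSubgroup_inf_ker_snd (hc : Subgroup.center G = ⊥) (φ : G × A ≃* G × A) :
    fixedSubgroup φ.toMonoidHom ⊓ (MonoidHom.snd G A).ker =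
      (fixedSubgroup (φ.inducedFst hc).toMonoidHom ⊓
        ((MonoidHom.snd G A).comp (φ.toMonoidHom.comp (MonoidHom.inl G A))).ker).map
        (MonoidHom.inl G A) := by
  ext ⟨g, a⟩
  simp only [toMonoidHom_eq_coe, MonoidHom.ker_snd, Subgroup.mem_inf, mem_fixedSubgroup,
    MonoidHom.coe_coe, Prod.ext_iff, Subgroup.mem_prod, Subgroup.mem_top, Subgroup.mem_bot,
    true_and, inducedFst, Subgroup.mem_map, coe_mk, Equiv.coe_fn_mk, MonoidHom.mem_ker,
    MonoidHom.coe_comp, MonoidHom.coe_snd, Function.comp_apply, MonoidHom.inl_apply,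
    existsAndEq]
  constructor <;> rintro ⟨hfix, rfl⟩ <;> exact ⟨hfix, rfl⟩

end MulEquiv

theorem fixedSubgroup_prod_fg {G A : Type*} [Group G] [CommGroup A] [Group.FG A]
    (hc : Subgroup.center G = ⊥)
    (hfgfp : ∀ ψ : G ≃* G, (fixedSubgroup ψ.toMonoidHom).FG)
    (hinert : ∀ ψ : G ≃* G, (commutator G ⊓ fixedSubgroup ψ.toMonoidHom).FG)
    (φ : G × A ≃* G × A) : (fixedSubgroup φ.toMonoidHom).FG := by
  set α := φ.inducedFst hc
  set f := (MonoidHom.snd G A).comp (φ.toMonoidHom.comp (MonoidHom.inl G A))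
  refine Subgroup.fg_of_fg_map_of_fg_inf_ker (MonoidHom.snd G A) (Subgroup.fg_of_commGroup _) ?_
  rw [φ.fixedSubgroup_inf_ker_snd hc]
  refine (Subgroup.fg_of_le_of_commutator_le ?_ inf_le_left (hfgfp α) (hinert α) ?_).map _
  · exact fun g hg => ⟨hg.2, Abelianization.commutator_subset_ker f hg.1⟩
  · exact le_inf (Subgroup.commutator_mono le_top le_top) (Subgroup.commutator_le_self _)

/-- Let `G` be a centerless group with FGFP_a, finitely generated derived subgroup,
and such that `H ∩ Fix ψ` is finitely generated for every automorphism `ψ` of `G` and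
every finitely generated subgroup `H ≤ G`.  Then `G × ℤᵐ` has FGFP_a for all `m ≥ 1`. -/
theorem fgfp_prod_int_pow_of_inert {G : Type*} [Group G]
    (hc : Subgroup.center G = ⊥)
    (hfgfp : ∀ ψ : G ≃* G, (fixedSubgroup ψ.toMonoidHom).FG)
    (hcomm : (commutator G).FG)
    (hinert : ∀ (ψ : G ≃* G) (H : Subgroup G), H.FG →
      (H ⊓ fixedSubgroup ψ.toMonoidHom).FG) :
    ∀ m : ℕ, 1 ≤ m →
      ∀ φ : (G × Multiplicative (Fin m → ℤ)) ≃* (G × Multiplicative (Fin m → ℤ)),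
        (fixedSubgroup φ.toMonoidHom).FG :=
  fun _ _ φ => fixedSubgroup_prod_fg hc hfgfp (fun ψ => hinert ψ _ hcomm) φ
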